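/- For every Nash equilibrium (respectively, leader strategy profile) σ of an MDSG, there exists a Nash equilibrium (respectively, leader strategy profile) σ' with the same outcome plays (π_{σ'}(v) = π_σ(v) for every vertex v with Δ(v) > 0, hence E_p(σ') = E_p(σ) for all players p) that is a reward-and-punish strategy profile: on every history that deviates from the outcome plays, each player's action depends only on the current vertex and on the identity of the first player who deviated (i.e., after the first deviation by a player p, all other players follow a fixed positional strategy depending only on p). -/

import Mathlib

open scoped BigOperators

/-- A multi-player discounted sum game (MDSG) on sets of players `P`,
vertices `V` and actions `A`, all required to be finite (`A` nonempty).
The `owner` of a vertex chooses the action there; `tr` is the transition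
function, `rew p v a` is the reward of player `p` for taking action `a`
at vertex `v`, `init` is the initial probability distribution on the
vertices, and `disc` is the discount factor. -/
structure MDSG (P V A : Type) : Type where
  fin_P : Finite P
  fin_V : Finite V
  fin_A : Finite A
  nonempty_A : Nonempty A
  owner : V → P
  tr : V → A → V
  rew : P → V → A → ℝ
  init : V → ℝ
  init_nonneg : ∀ v, 0 ≤ init v
  init_sum : ∑' v, init v = 1
  disc : ℝ
  disc_pos : 0 < disc
  disc_lt_one : disc < 1

/-- A pure strategy profile: given the history (the list of vertex/action pairs
seen so far) and the current vertex, the owner of the current vertex chooses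
an action.  The strategy of an individual player `p` is the restriction of the
profile to the vertices owned by `p`. -/
abbrev Profile (V A : Type) : Type := List (V × A) → V → A

namespace MDSG

variable {P V A : Type}

/-- The pair (history, current vertex) after `n` steps of the play of `σ` from `v`. -/
def histState (G : MDSG P V A) (σ : Profile V A) (v : V) : ℕ → List (V × A) × V
  | 0 => ([], v)
  | n + 1 =>
    let s := G.histState σ v n
    (s.1 ++ [(s.2, σ s.1 s.2)], G.tr s.2 (σ s.1 s.2))

/-- The vertex visited at step `n` of the play of `σ` from `v`. -/
def playV (G : MDSG P V A) (σ : Profile V A) (v : V) (n : ℕ) : V :=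
  (G.histState σ v n).2

/-- The action taken at step `n` of the play of `σ` from `v`. -/
def playA (G : MDSG P V A) (σ : Profile V A) (v : V) (n : ℕ) : A :=
  σ (G.histState σ v n).1 (G.playV σ v n)

/-- The discounted reward of player `p` on the play of `σ` from `v`. -/
noncomputable def reward (G : MDSG P V A) (p : P) (σ : Profile V A) (v : V) : ℝ :=
  ∑' i : ℕ, G.rew p (G.playV σ v i) (G.playA σ v i) * G.disc ^ i

/-- The expected reward of player `p` under the strategy profile `σ`. -/
noncomputable def ER (G : MDSG P V A) (p : P) (σ : Profile V A) : ℝ :=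
  ∑' v : V, G.init v * G.reward p σ v

/-- `σ'` differs from `σ` at most in the strategy of player `p`. -/
def DiffOnly (G : MDSG P V A) (σ σ' : Profile V A) (p : P) : Prop :=
  ∀ h v, G.owner v ≠ p → σ' h v = σ h v

/-- Nash equilibrium: no player can profit from a unilateral deviation. -/
def IsNash (G : MDSG P V A) (σ : Profile V A) : Prop :=
  ∀ p σ', G.DiffOnly σ σ' p → G.ER p σ' ≤ G.ER p σ

/-- Leader strategy profile: no player other than the leader `l` can profit
from a unilateral deviation. -/
def IsLeaderSP (G : MDSG P V A) (l : P) (σ : Profile V A) : Prop :=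
  ∀ p, p ≠ l → ∀ σ', G.DiffOnly σ σ' p → G.ER p σ' ≤ G.ER p σ

/-- `σ` is a (pure) strategy profile with memory bound `b`: there is a memory
set `M` with `|M| ≤ b`, an initial memory state, a memory update function and
a usage function producing all the actions of `σ`. -/
def MemBound (G : MDSG P V A) (σ : Profile V A) (b : ℕ) : Prop :=
  ∃ n : ℕ, n ≤ b ∧ ∃ (m₀ : Fin n) (μ : Fin n → V × A → Fin n) (u : Fin n → V → A),
    ∀ h v, σ h v = u (h.foldl μ m₀) v

/-- `σ` is memoryless (positional): actions depend only on the current vertex. -/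
def Positional (G : MDSG P V A) (σ : Profile V A) : Prop :=
  ∀ h h' v, σ h v = σ h' v

open Classical in
/-- Combination of a strategy for player `p` with a joint strategy of the other players. -/
noncomputable def combine (G : MDSG P V A) (p : P) (τp τo : Profile V A) : Profile V A :=
  fun h v => if G.owner v = p then τp h v else τo h v

/-- The lower value of player `p` at vertex `v`: the supremum over the pure
strategies of `p` of the infimum over the joint pure strategies of the other
players of the reward of `p` on the resulting play from `v`. -/
noncomputable def lowerValue (G : MDSG P V A) (p : P) (v : V) : ℝ :=
  ⨆ τp : Profile V A, ⨅ τo : Profile V A, G.reward p (G.combine p τp τo) v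

/-- The upper value of player `p` at vertex `v`. -/
noncomputable def upperValue (G : MDSG P V A) (p : P) (v : V) : ℝ :=
  ⨅ τo : Profile V A, ⨆ τp : Profile V A, G.reward p (G.combine p τp τo) v

/-- The history `h` contains a deviation from `σ` at position `i`. -/
def DeviatesAt (G : MDSG P V A) (σ : Profile V A) (h : List (V × A)) (i : ℕ) : Prop :=
  ∃ hi : i < h.length, (h.get ⟨i, hi⟩).2 ≠ σ (h.take i) (h.get ⟨i, hi⟩).1

/-- Reward-and-punish profile: on every history that deviates from the
prescribed actions, every action depends only on the current vertex and on the
identity of the first player who deviated (all players follow a fixed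
positional strategy depending only on the first deviator). -/
def IsRewardPunish (G : MDSG P V A) (σ : Profile V A) : Prop :=
  ∃ punish : P → V → A, ∀ (h : List (V × A)) (i : ℕ) (hi : i < h.length),
    G.DeviatesAt σ h i → (∀ j, j < i → ¬ G.DeviatesAt σ h j) →
    ∀ v, σ h v = punish (G.owner (h.get ⟨i, hi⟩).1) v

/-- The outcome plays of `σ` are generated with compliance memory bound `b`:
on every history on which all players have complied, the actions of `σ` are
produced by a memory structure with at most `b` states. -/
def ComplianceMemBound (G : MDSG P V A) (σ : Profile V A) (b : ℕ) : Prop :=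
  ∃ n : ℕ, n ≤ b ∧ ∃ (m₀ : Fin n) (μ : Fin n → V × A → Fin n) (u : Fin n → V → A),
    ∀ h : List (V × A), (∀ i, ¬ G.DeviatesAt σ h i) →
      ∀ v, σ h v = u (h.foldl μ m₀) v

/-- The set of stationary mixed decision vectors: an assignment of a
probability distribution over the actions to every vertex. -/
def simplexD (V A : Type) : Set (V → A → ℝ) :=
  {d | ∀ v, (∀ a, 0 ≤ d v a) ∧ ∑' a, d v a = 1}

end MDSG

/-!
Let `σ'` follow `σ` as long as the history complies with it, and after a first deviation at a
vertex of `p` let every player play a positional strategy holding `p` down to its minmax value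
`value p`, the fixed point of the Bellman contraction of the zero-sum game of `p` against the
others. The outcome plays do not change. Against a deviation `σ''` of `p` from `σ'`, `p` earns at
most `value p` after its first deviation; switching there to a positional strategy securing
`value p` does at least as well and is a deviation from `σ` itself, so it cannot beat `σ`.
-/

open Filter Topology in
theorem tsum_mul_pow_le_of_add_mul_le {d C : ℝ} {r g : ℕ → ℝ} (hd0 : 0 ≤ d) (hd1 : d < 1)
    (hr : Summable fun n => r n * d ^ n) (hg : ∀ n, |g n| ≤ C)
    (h : ∀ n, r n + d * g (n + 1) ≤ g n) : ∑' n, r n * d ^ n ≤ g 0 := by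
  have hpartial : ∀ N, ∑ n ∈ Finset.range N, r n * d ^ n ≤ g 0 - d ^ N * g N := by
    intro N
    induction N with
    | zero => simp
    | succ N ih =>
      rw [Finset.sum_range_succ, pow_succ]
      nlinarith [mul_le_mul_of_nonneg_left (h N) (pow_nonneg hd0 N)]
  have htail : Tendsto (fun N => d ^ N * g N) atTop (𝓝 0) := by
    refine squeeze_zero_norm (fun N => ?_)
      (by simpa using (tendsto_pow_atTop_nhds_zero_of_lt_one hd0 hd1).mul_const C)
    rw [norm_mul, norm_pow, Real.norm_of_nonneg hd0, Real.norm_eq_abs]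
    exact mul_le_mul_of_nonneg_left (hg N) (pow_nonneg hd0 N)
  refine le_of_tendsto_of_tendsto' hr.hasSum.tendsto_sum_nat ?_ hpartial
  simpa using tendsto_const_nhds.sub htail

theorem le_tsum_mul_pow_of_le_add_mul {d C : ℝ} {r g : ℕ → ℝ} (hd0 : 0 ≤ d) (hd1 : d < 1)
    (hr : Summable fun n => r n * d ^ n) (hg : ∀ n, |g n| ≤ C)
    (h : ∀ n, g n ≤ r n + d * g (n + 1)) : g 0 ≤ ∑' n, r n * d ^ n := by
  have := tsum_mul_pow_le_of_add_mul_le (r := fun n => -r n) (g := fun n => -g n) hd0 hd1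
    (by simpa [neg_mul] using hr.neg) (by simpa using hg) (fun n => by linarith [h n])
  simp only [neg_mul, tsum_neg] at this
  linarith

def Profile.shift {V A : Type} (σ : Profile V A) (g : List (V × A)) : Profile V A :=
  fun h u => σ (g ++ h) u

namespace MDSG

variable {P V A : Type} (G : MDSG P V A)

section Plays

theorem histState_succ (σ : Profile V A) (v : V) (n : ℕ) :
    G.histState σ v (n + 1) = ((G.histState σ v n).1 ++ [(G.playV σ v n, G.playA σ v n)],
      G.tr (G.playV σ v n) (G.playA σ v n)) := rfl

variable {G}

theorem histState_eq_of_agree {σ τ : Profile V A} {v : V} {k : ℕ}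
    (h : ∀ n < k, τ (G.histState σ v n).1 (G.playV σ v n) = G.playA σ v n) :
    ∀ n ≤ k, G.histState τ v n = G.histState σ v n := by
  intro n hn
  induction n with
  | zero => rfl
  | succ n ih =>
    have e := ih (by omega)
    have eV : G.playV τ v n = G.playV σ v n := congrArg Prod.snd e
    have eA : G.playA τ v n = G.playA σ v n := by
      rw [playA, e, eV, ← h n (by omega)]
    rw [histState_succ, histState_succ, e, eV, eA]

theorem play_eq_of_agree_lt {σ τ : Profile V A} {v : V} {k n : ℕ}
    (h : ∀ n < k, τ (G.histState σ v n).1 (G.playV σ v n) = G.playA σ v n) (hn : n < k) :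
    G.playV τ v n = G.playV σ v n ∧ G.playA τ v n = G.playA σ v n := by
  have e := histState_eq_of_agree h n hn.le
  have eV : G.playV τ v n = G.playV σ v n := congrArg Prod.snd e
  refine ⟨eV, ?_⟩
  rw [playA, e, eV, ← h n hn]

theorem reward_eq_of_agree {σ τ : Profile V A} {v : V}
    (h : ∀ n, τ (G.histState σ v n).1 (G.playV σ v n) = G.playA σ v n) (p : P) :
    G.reward p τ v = G.reward p σ v :=
  tsum_congr fun n => by
    obtain ⟨eV, eA⟩ := play_eq_of_agree_lt (k := n + 1) (fun m _ => h m) n.lt_succ_self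
    rw [eV, eA]

variable (G)

theorem histState_add (σ : Profile V A) (v : V) (k n : ℕ) :
    G.histState σ v (k + n) =
      ((G.histState σ v k).1 ++ (G.histState (σ.shift (G.histState σ v k).1) (G.playV σ v k) n).1,
        (G.histState (σ.shift (G.histState σ v k).1) (G.playV σ v k) n).2) := by
  induction n with
  | zero => simp [histState, playV]
  | succ n ih =>
    simp only [← add_assoc, histState_succ, playV, playA, ih]
    simp [Profile.shift]

theorem playV_add (σ : Profile V A) (v : V) (k n : ℕ) :
    G.playV σ v (k + n) = G.playV (σ.shift (G.histState σ v k).1) (G.playV σ v k) n := by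
  rw [playV, histState_add]; rfl

theorem playA_add (σ : Profile V A) (v : V) (k n : ℕ) :
    G.playA σ v (k + n) = G.playA (σ.shift (G.histState σ v k).1) (G.playV σ v k) n := by
  rw [playA, playV, histState_add]; rfl

end Plays

section Rewards

theorem summable_reward (p : P) (σ : Profile V A) (v : V) :
    Summable fun i => G.rew p (G.playV σ v i) (G.playA σ v i) * G.disc ^ i := by
  have := G.fin_V
  have := G.fin_A
  obtain ⟨R, hR⟩ := Finite.bddAbove_range fun x : V × A => |G.rew p x.1 x.2|
  refine .of_norm_bounded ((summable_geometric_of_lt_one G.disc_pos.le G.disc_lt_one).mul_left R)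
    fun i => ?_
  rw [norm_mul, norm_pow, Real.norm_of_nonneg G.disc_pos.le, Real.norm_eq_abs]
  exact mul_le_mul_of_nonneg_right (hR ⟨(_, _), rfl⟩) (pow_nonneg G.disc_pos.le i)

theorem reward_eq_sum_add (p : P) (σ : Profile V A) (v : V) (k : ℕ) :
    G.reward p σ v = ∑ i ∈ Finset.range k, G.rew p (G.playV σ v i) (G.playA σ v i) * G.disc ^ i
      + G.disc ^ k * G.reward p (σ.shift (G.histState σ v k).1) (G.playV σ v k) := by
  rw [reward, ← (G.summable_reward p σ v).sum_add_tsum_nat_add k, reward, ← tsum_mul_left]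
  congr 1
  refine tsum_congr fun i => ?_
  rw [add_comm i k, G.playV_add, G.playA_add, pow_add]
  ring

variable {G}

theorem reward_le_reward_of_agree_lt {p : P} {σ τ : Profile V A} {v : V} {k : ℕ}
    (h : ∀ n < k, τ (G.histState σ v n).1 (G.playV σ v n) = G.playA σ v n)
    (htail : G.reward p (σ.shift (G.histState σ v k).1) (G.playV σ v k) ≤
      G.reward p (τ.shift (G.histState σ v k).1) (G.playV σ v k)) :
    G.reward p σ v ≤ G.reward p τ v := by
  have e := histState_eq_of_agree h k le_rfl
  have eV : G.playV τ v k = G.playV σ v k := congrArg Prod.snd e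
  have hprefix : ∀ i ∈ Finset.range k,
      G.rew p (G.playV τ v i) (G.playA τ v i) * G.disc ^ i =
        G.rew p (G.playV σ v i) (G.playA σ v i) * G.disc ^ i := fun i hi => by
    obtain ⟨eVi, eAi⟩ := play_eq_of_agree_lt h (Finset.mem_range.mp hi)
    rw [eVi, eAi]
  rw [G.reward_eq_sum_add p σ v k, G.reward_eq_sum_add p τ v k, e, eV, Finset.sum_congr rfl hprefix]
  have := pow_nonneg G.disc_pos.le k
  gcongr

end Rewards

section Values

def qValue (p : P) (f : V → ℝ) (v : V) (a : A) : ℝ :=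
  G.rew p v a + G.disc * f (G.tr v a)

variable {G}

theorem reward_le_of_qValue_le {p : P} {σ : Profile V A} {v : V} {f : V → ℝ}
    (h : ∀ n, G.qValue p f (G.playV σ v n) (G.playA σ v n) ≤ f (G.playV σ v n)) :
    G.reward p σ v ≤ f v := by
  have := G.fin_V
  obtain ⟨C, hC⟩ := Finite.bddAbove_range fun w => |f w|
  exact tsum_mul_pow_le_of_add_mul_le (g := fun n => f (G.playV σ v n)) G.disc_pos.le
    G.disc_lt_one (G.summable_reward p σ v) (fun n => hC ⟨_, rfl⟩) h

theorem le_reward_of_le_qValue {p : P} {σ : Profile V A} {v : V} {f : V → ℝ}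
    (h : ∀ n, f (G.playV σ v n) ≤ G.qValue p f (G.playV σ v n) (G.playA σ v n)) :
    f v ≤ G.reward p σ v := by
  have := G.fin_V
  obtain ⟨C, hC⟩ := Finite.bddAbove_range fun w => |f w|
  exact le_tsum_mul_pow_of_le_add_mul (g := fun n => f (G.playV σ v n)) G.disc_pos.le
    G.disc_lt_one (G.summable_reward p σ v) (fun n => hC ⟨_, rfl⟩) h

variable (G) [Fintype A] [Nonempty A]

open Classical in
noncomputable def bellman (p : P) (f : V → ℝ) (v : V) : ℝ :=
  if G.owner v = p then Finset.univ.sup' Finset.univ_nonempty (G.qValue p f v)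
  else Finset.univ.inf' Finset.univ_nonempty (G.qValue p f v)

theorem bellman_le_add {p : P} {f g : V → ℝ} {c : ℝ} (hfg : ∀ w, f w ≤ g w + c) (v : V) :
    G.bellman p f v ≤ G.bellman p g v + G.disc * c := by
  have hq : ∀ a, G.qValue p f v a ≤ G.qValue p g v a + G.disc * c := fun a => by
    have := mul_le_mul_of_nonneg_left (hfg (G.tr v a)) G.disc_pos.le
    simp only [qValue]
    linarith
  unfold bellman
  split_ifs
  · exact Finset.sup'_le _ _ fun a _ => (hq a).trans (by gcongr; exact Finset.le_sup' _ (by simp))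
  · obtain ⟨a, -, ha⟩ := Finset.univ.exists_mem_eq_inf' Finset.univ_nonempty (G.qValue p g v)
    rw [ha]
    exact (Finset.inf'_le _ (Finset.mem_univ a)).trans (hq a)

variable [Fintype V]

theorem contractingWith_bellman (p : P) :
    ContractingWith ⟨G.disc, G.disc_pos.le⟩ (G.bellman p) := by
  refine ⟨G.disc_lt_one, LipschitzWith.of_dist_le_mul fun f g => ?_⟩
  have hnn : 0 ≤ G.disc * dist f g := mul_nonneg G.disc_pos.le dist_nonneg
  refine (dist_pi_le_iff hnn).2 fun v => abs_sub_le_iff.2 ⟨?_, ?_⟩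
  · have := G.bellman_le_add (p := p) (f := f) (g := g)
      (fun w => by linarith [(abs_sub_le_iff.1 (dist_le_pi_dist f g w)).1]) v
    linarith
  · have := G.bellman_le_add (p := p) (f := g) (g := f)
      (fun w => by linarith [(abs_sub_le_iff.1 (dist_le_pi_dist f g w)).2]) v
    linarith

noncomputable def value (p : P) : V → ℝ :=
  ContractingWith.fixedPoint (G.bellman p) (G.contractingWith_bellman p)

theorem bellman_value (p : P) : G.bellman p (G.value p) = G.value p :=
  ContractingWith.fixedPoint_isFixedPt (G.contractingWith_bellman p)

noncomputable def bestAction (p : P) (v : V) : A :=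
  (Finset.univ.exists_mem_eq_sup' Finset.univ_nonempty (G.qValue p (G.value p) v)).choose

noncomputable def punishAction (p : P) (v : V) : A :=
  (Finset.univ.exists_mem_eq_inf' Finset.univ_nonempty (G.qValue p (G.value p) v)).choose

variable {G}

theorem qValue_le_value {p : P} {v : V} (hv : G.owner v = p) (a : A) :
    G.qValue p (G.value p) v a ≤ G.value p v := by
  rw [← G.bellman_value p, bellman, if_pos hv, G.bellman_value p]
  exact Finset.le_sup' _ (Finset.mem_univ a)

theorem value_le_qValue {p : P} {v : V} (hv : G.owner v ≠ p) (a : A) :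
    G.value p v ≤ G.qValue p (G.value p) v a := by
  rw [← G.bellman_value p, bellman, if_neg hv, G.bellman_value p]
  exact Finset.inf'_le _ (Finset.mem_univ a)

theorem value_eq_qValue_bestAction {p : P} {v : V} (hv : G.owner v = p) :
    G.value p v = G.qValue p (G.value p) v (G.bestAction p v) := by
  rw [← G.bellman_value p, bellman, if_pos hv, G.bellman_value p]
  exact (Finset.univ.exists_mem_eq_sup' Finset.univ_nonempty _).choose_spec.2

theorem value_eq_qValue_punishAction {p : P} {v : V} (hv : G.owner v ≠ p) :
    G.value p v = G.qValue p (G.value p) v (G.punishAction p v) := by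
  rw [← G.bellman_value p, bellman, if_neg hv, G.bellman_value p]
  exact (Finset.univ.exists_mem_eq_inf' Finset.univ_nonempty _).choose_spec.2

theorem reward_le_value_of_punish {p : P} {σ : Profile V A}
    (hσ : ∀ h u, G.owner u ≠ p → σ h u = G.punishAction p u) (v : V) :
    G.reward p σ v ≤ G.value p v := by
  refine reward_le_of_qValue_le fun n => ?_
  by_cases hn : G.owner (G.playV σ v n) = p
  · exact qValue_le_value hn _
  · rw [playA, hσ _ _ hn, value_eq_qValue_punishAction hn]

theorem value_le_reward_of_best {p : P} {σ : Profile V A}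
    (hσ : ∀ h u, G.owner u = p → σ h u = G.bestAction p u) (v : V) :
    G.value p v ≤ G.reward p σ v := by
  refine le_reward_of_le_qValue fun n => ?_
  by_cases hn : G.owner (G.playV σ v n) = p
  · rw [playA, hσ _ _ hn, value_eq_qValue_bestAction hn]
  · exact value_le_qValue hn _

end Values

variable {G}

section Deviations

variable (G) in
def Compliant (σ : Profile V A) (h : List (V × A)) : Prop :=
  ∀ i, ¬ G.DeviatesAt σ h i

theorem deviatesAt_append_of_lt {σ : Profile V A} {h g : List (V × A)} {i : ℕ}
    (hi : i < h.length) : G.DeviatesAt σ (h ++ g) i ↔ G.DeviatesAt σ h i := by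
  have hi' : i < h.length + g.length := by omega
  simp [DeviatesAt, hi, hi', List.getElem_append_left hi, List.take_append_of_le_length hi.le]

theorem deviatesAt_append_cons_length {σ : Profile V A} {h g : List (V × A)} {u : V} {a : A} :
    G.DeviatesAt σ (h ++ (u, a) :: g) h.length ↔ a ≠ σ h u := by
  simp [DeviatesAt]

theorem compliant_nil (σ : Profile V A) : G.Compliant σ [] :=
  fun _ hi => by simpa using hi.1

theorem compliant_append_singleton {σ : Profile V A} {h : List (V × A)} {u : V} {a : A} :
    G.Compliant σ (h ++ [(u, a)]) ↔ G.Compliant σ h ∧ a = σ h u := by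
  refine ⟨fun hc => ⟨fun i hi => hc i ((deviatesAt_append_of_lt hi.1).2 hi),
    by_contra fun ha => hc _ (deviatesAt_append_cons_length.2 ha)⟩, fun ⟨hc, ha⟩ i hi => ?_⟩
  have hlt : i < h.length + 1 := by simpa using hi.1
  rcases Nat.lt_succ_iff_lt_or_eq.1 hlt with hlt | rfl
  · exact hc i ((deviatesAt_append_of_lt hlt).1 hi)
  · exact deviatesAt_append_cons_length.1 hi ha

theorem not_compliant_append_cons {σ : Profile V A} {h g : List (V × A)} {u : V} {a : A}
    (ha : a ≠ σ h u) : ¬ G.Compliant σ (h ++ (u, a) :: g) :=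
  fun hc => hc _ (deviatesAt_append_cons_length.2 ha)

theorem compliant_histState (σ : Profile V A) (v : V) (n : ℕ) :
    G.Compliant σ (G.histState σ v n).1 := by
  induction n with
  | zero => exact compliant_nil σ
  | succ n ih => exact compliant_append_singleton.2 ⟨ih, rfl⟩

end Deviations

theorem ER_mono {p : P} {σ τ : Profile V A} (h : ∀ v, G.reward p σ v ≤ G.reward p τ v) :
    G.ER p σ ≤ G.ER p τ := by
  have := G.fin_V
  exact Summable.tsum_le_tsum (fun v => mul_le_mul_of_nonneg_left (h v) (G.init_nonneg v))
    .of_finite .of_finite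

variable (G) in
def IsBestResponse (p : P) (σ : Profile V A) : Prop :=
  ∀ σ', G.DiffOnly σ σ' p → G.ER p σ' ≤ G.ER p σ

section RewardPunish

variable [Fintype V] [Fintype A] [Nonempty A]

variable (G) in
open Classical in
noncomputable def rewardPunish (σ : Profile V A) : Profile V A := fun h u =>
  if hd : ∃ i, G.DeviatesAt σ h i then
    G.punishAction (G.owner (h.get ⟨Nat.find hd, (Nat.find_spec hd).1⟩).1) u
  else σ h u

theorem rewardPunish_of_compliant {σ : Profile V A} {h : List (V × A)} (hc : G.Compliant σ h)
    (u : V) : G.rewardPunish σ h u = σ h u :=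
  dif_neg (not_exists.2 hc)

theorem rewardPunish_append_cons {σ : Profile V A} {h : List (V × A)} {u : V} {a : A}
    (hc : G.Compliant σ h) (ha : a ≠ σ h u) (g : List (V × A)) (x : V) :
    G.rewardPunish σ (h ++ (u, a) :: g) x = G.punishAction (G.owner u) x := by
  classical
  have hdev := (deviatesAt_append_cons_length (G := G) (g := g)).2 ha
  have hd : ∃ i, G.DeviatesAt σ (h ++ (u, a) :: g) i := ⟨_, hdev⟩
  have hfind : Nat.find hd = h.length := le_antisymm (Nat.find_min' hd hdev)
    (not_lt.1 fun hlt => hc _ ((deviatesAt_append_of_lt hlt).1 (Nat.find_spec hd)))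
  rw [rewardPunish, dif_pos hd]
  simp [hfind]

theorem compliant_rewardPunish_iff {σ : Profile V A} {h : List (V × A)} :
    G.Compliant (G.rewardPunish σ) h ↔ G.Compliant σ h := by
  induction h using List.reverseRecOn with
  | nil => exact iff_of_true (compliant_nil _) (compliant_nil _)
  | append_singleton h x ih =>
    rw [compliant_append_singleton, compliant_append_singleton, ih]
    exact and_congr_right fun hc => by rw [rewardPunish_of_compliant hc]

variable (G) in
theorem isRewardPunish_rewardPunish (σ : Profile V A) : G.IsRewardPunish (G.rewardPunish σ) := by
  refine ⟨G.punishAction, fun h i hi ⟨_, hne⟩ hmin v => ?_⟩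
  have hsplit : h = h.take i ++ h.get ⟨i, hi⟩ :: h.drop (i + 1) := by simp
  have hc : G.Compliant σ (h.take i) := by
    refine compliant_rewardPunish_iff.1 fun j hj => ?_
    have hji : j < i := hj.1.trans_le (List.length_take_le i h)
    exact hmin j hji (List.take_append_drop i h ▸ (deviatesAt_append_of_lt hj.1).2 hj)
  rw [rewardPunish_of_compliant hc] at hne
  exact (congrArg (G.rewardPunish σ · v) hsplit).trans (rewardPunish_append_cons hc hne _ _)

variable (G) in
theorem play_rewardPunish (σ : Profile V A) (v : V) (n : ℕ) :
    G.playV (G.rewardPunish σ) v n = G.playV σ v n ∧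
      G.playA (G.rewardPunish σ) v n = G.playA σ v n :=
  play_eq_of_agree_lt (k := n + 1)
    (fun m _ => rewardPunish_of_compliant (compliant_histState σ v m) _) n.lt_succ_self

variable (G) in
theorem ER_rewardPunish (p : P) (σ : Profile V A) : G.ER p (G.rewardPunish σ) = G.ER p σ :=
  tsum_congr fun v => by
    rw [reward_eq_of_agree (fun m => rewardPunish_of_compliant (compliant_histState σ v m) _)]

variable (G) in
open Classical in
noncomputable def securingDeviation (σ σ' : Profile V A) (p : P) : Profile V A := fun h u =>
  if G.owner u = p then (if G.Compliant σ h then σ' h u else G.bestAction p u) else σ h u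

theorem diffOnly_securingDeviation (σ σ' : Profile V A) (p : P) :
    G.DiffOnly σ (G.securingDeviation σ σ' p) p :=
  fun _ _ hu => if_neg hu

theorem reward_shift_le_reward_shift_securingDeviation {p : P} {σ σ' : Profile V A}
    (hσ' : G.DiffOnly (G.rewardPunish σ) σ' p) {h : List (V × A)} {u : V} {a : A}
    (hc : G.Compliant σ h) (ha : a ≠ σ h u) (hu : G.owner u = p) (v : V) :
    G.reward p (σ'.shift (h ++ [(u, a)])) v ≤
      G.reward p ((G.securingDeviation σ σ' p).shift (h ++ [(u, a)])) v := by
  refine (reward_le_value_of_punish (fun g x hx => ?_) v).trans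
    (value_le_reward_of_best (fun g x hx => ?_) v)
  · change σ' (h ++ [(u, a)] ++ g) x = _
    rw [List.append_assoc, List.singleton_append, hσ' _ _ hx, rewardPunish_append_cons hc ha, hu]
  · change G.securingDeviation σ σ' p (h ++ [(u, a)] ++ g) x = _
    rw [List.append_assoc, List.singleton_append]
    simp [securingDeviation, hx, not_compliant_append_cons ha]

theorem reward_le_reward_securingDeviation {p : P} {σ σ' : Profile V A}
    (hσ' : G.DiffOnly (G.rewardPunish σ) σ' p) (w : V) :
    G.reward p σ' w ≤ G.reward p (G.securingDeviation σ σ' p) w := by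
  classical
  have hcopy : ∀ h u, G.Compliant σ h → G.securingDeviation σ σ' p h u = σ' h u := by
    intro h u hc
    by_cases hu : G.owner u = p
    · simp [securingDeviation, hu, hc]
    · simp [securingDeviation, hu, hσ' h u hu, rewardPunish_of_compliant hc]
  by_cases hcomp : ∀ n, G.Compliant σ (G.histState σ' w n).1
  · exact (reward_eq_of_agree (fun n => hcopy _ _ (hcomp n)) p).ge
  rw [not_forall] at hcomp
  obtain ⟨k, hk, hmin⟩ : ∃ k, ¬ G.Compliant σ (G.histState σ' w k).1 ∧
      ∀ i < k, G.Compliant σ (G.histState σ' w i).1 :=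
    ⟨Nat.find hcomp, Nat.find_spec hcomp, fun i hi => not_not.1 (Nat.find_min hcomp hi)⟩
  obtain ⟨m, rfl⟩ : ∃ m, k = m + 1 :=
    Nat.exists_eq_succ_of_ne_zero (by rintro rfl; exact hk (compliant_nil σ))
  have hcm := hmin m m.lt_succ_self
  have ha : G.playA σ' w m ≠ σ (G.histState σ' w m).1 (G.playV σ' w m) := fun ha =>
    hk (by rw [histState_succ]; exact compliant_append_singleton.2 ⟨hcm, ha⟩)
  have hu : G.owner (G.playV σ' w m) = p := by
    by_contra hu
    exact ha (by rw [← rewardPunish_of_compliant hcm, ← hσ' _ _ hu]; rfl)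
  refine reward_le_reward_of_agree_lt (k := m + 1) (fun n hn => hcopy _ _ (hmin n hn)) ?_
  rw [histState_succ]
  exact reward_shift_le_reward_shift_securingDeviation hσ' hcm ha hu _

theorem IsBestResponse.rewardPunish {p : P} {σ : Profile V A} (hσ : G.IsBestResponse p σ) :
    G.IsBestResponse p (G.rewardPunish σ) := fun σ' hσ' =>
  calc G.ER p σ' ≤ G.ER p (G.securingDeviation σ σ' p) :=
        ER_mono (reward_le_reward_securingDeviation hσ')
    _ ≤ G.ER p σ := hσ _ (diffOnly_securingDeviation σ σ' p)
    _ = G.ER p (G.rewardPunish σ) := (G.ER_rewardPunish p σ).symm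

end RewardPunish

end MDSG

open MDSG in
/-- Every Nash equilibrium (respectively, leader strategy profile) `σ` of an
MDSG can be replaced by a Nash equilibrium (respectively, leader strategy
profile) `σ'` with the same outcome plays, and hence the same expected rewards
for all players, that is a reward-and-punish strategy profile: on every
history that deviates from the prescribed actions, each player's action
depends only on the current vertex and on the identity of the first player
who deviated. -/
theorem reward_and_punish_suffices {P V A : Type} (G : MDSG P V A) :
    (∀ σ : Profile V A, G.IsNash σ →
      ∃ σ' : Profile V A, G.IsNash σ' ∧ G.IsRewardPunish σ' ∧
        (∀ w : V, 0 < G.init w →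
          ∀ n : ℕ, G.playV σ' w n = G.playV σ w n ∧ G.playA σ' w n = G.playA σ w n) ∧
        (∀ p : P, G.ER p σ' = G.ER p σ)) ∧
    (∀ (l : P) (σ : Profile V A), G.IsLeaderSP l σ →
      ∃ σ' : Profile V A, G.IsLeaderSP l σ' ∧ G.IsRewardPunish σ' ∧
        (∀ w : V, 0 < G.init w →
          ∀ n : ℕ, G.playV σ' w n = G.playV σ w n ∧ G.playA σ' w n = G.playA σ w n) ∧
        (∀ p : P, G.ER p σ' = G.ER p σ)) := by
  have := G.fin_V
  have := G.fin_A
  have := G.nonempty_A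
  let := Fintype.ofFinite V
  let := Fintype.ofFinite A
  exact ⟨fun σ hσ => ⟨G.rewardPunish σ, fun p => IsBestResponse.rewardPunish (hσ p),
      G.isRewardPunish_rewardPunish σ, fun w _ => G.play_rewardPunish σ w,
      fun p => G.ER_rewardPunish p σ⟩,
    fun l σ hσ => ⟨G.rewardPunish σ, fun p hp => IsBestResponse.rewardPunish (hσ p hp),
      G.isRewardPunish_rewardPunish σ, fun w _ => G.play_rewardPunish σ w,
      fun p => G.ER_rewardPunish p σ⟩⟩
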